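/- arXiv:1101.2975 — 9 statements merged into one kernel-verified Lean document; each statement's English description precedes it below -/
import Mathlib

section
/- Substitute triangle inequality (additive version): for all g, h, λ in the upper half plane ℍ, γ(g+λ, h) ≤ c₀(λ)·γ(g,h) + (c₀(λ) - 1), where c₀(λ) = (1 + 2|λ|/Im h)². -/
/-- The hyperbolic semi-metric γ on the upper half plane. -/
noncomputable def gamSM (g h : ℂ) : ℝ :=
  ‖g - h‖ ^ 2 / (g.im * h.im)

lemma gam_key (a b L d : ℝ) (ha : 0 < a) (hb : 0 < b) (hL : 0 ≤ L) (hd : 0 ≤ d)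
    (h1 : b - a ≤ d) (h2 : a - b ≤ d) :
    (d + L) ^ 2 / (a * b) ≤
      (1 + 2 * L / b) ^ 2 * (d ^ 2 / (a * b)) + ((1 + 2 * L / b) ^ 2 - 1) := by
  have hb' : b ≠ 0 := hb.ne'
  have ha' : a ≠ 0 := ha.ne'
  have k1 : 0 ≤ (d - (b - a)) * (d + (b - a)) :=
    mul_nonneg (by linarith) (by linarith)
  have hpoly : (d + L) ^ 2 * b ^ 2 ≤
      (b + 2 * L) ^ 2 * d ^ 2 + ((b + 2 * L) ^ 2 - b ^ 2) * (a * b) := by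
    nlinarith [mul_nonneg (mul_nonneg hL hb.le) k1, mul_nonneg (mul_nonneg hL hL) k1,
      mul_nonneg (mul_nonneg hL hb.le) (sq_nonneg (2 * d - b)),
      mul_nonneg (mul_nonneg hL hL) (sq_nonneg (2 * a - b)),
      mul_nonneg (mul_nonneg hL hb.le) (sq_nonneg b),
      mul_nonneg (mul_nonneg hL hb.le) (sq_nonneg a),
      mul_nonneg (mul_nonneg hL hL) (sq_nonneg b)]
  have e1 : (d + L) ^ 2 / (a * b) = (d + L) ^ 2 * b ^ 2 / (a * b * b ^ 2) := by
    field_simp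
  have e2 : (1 + 2 * L / b) ^ 2 * (d ^ 2 / (a * b)) + ((1 + 2 * L / b) ^ 2 - 1) =
      ((b + 2 * L) ^ 2 * d ^ 2 + ((b + 2 * L) ^ 2 - b ^ 2) * (a * b)) / (a * b * b ^ 2) := by
    field_simp
  rw [e1, e2]
  exact div_le_div_of_nonneg_right hpoly (by positivity)

/-- Substitute triangle inequality, additive version:
γ(g+λ, h) ≤ c₀(λ)·γ(g,h) + (c₀(λ) - 1) with c₀(λ) = (1 + 2|λ|/Im h)². -/
theorem gam_substitute_triangle_add (g h lam : ℂ)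
    (hg : 0 < g.im) (hh : 0 < h.im) (hlam : 0 < lam.im) :
    gamSM (g + lam) h ≤
      (1 + 2 * ‖lam‖ / h.im) ^ 2 * gamSM g h +
        ((1 + 2 * ‖lam‖ / h.im) ^ 2 - 1) := by
  set a := g.im
  set b := h.im
  set L := ‖lam‖
  set d := ‖g - h‖
  have hL : 0 ≤ L := norm_nonneg _
  have hd : 0 ≤ d := norm_nonneg _
  have him : (g + lam).im = a + lam.im := by simp [a]
  have habs : ‖g + lam - h‖ ≤ d + L := by
    calc ‖g + lam - h‖ = ‖(g - h) + lam‖ := by ring_nf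
    _ ≤ d + L := norm_add_le _ _
  have him_bound : |a - b| ≤ d := by
    have := Complex.abs_im_le_norm (g - h)
    simpa [Complex.sub_im] using this
  have h1 : b - a ≤ d := by cases abs_le.mp him_bound with
    | intro l r => linarith
  have h2 : a - b ≤ d := (abs_le.mp him_bound).2
  have step1 : gamSM (g + lam) h ≤ (d + L) ^ 2 / (a * b) := by
    unfold gamSM
    rw [him]
    gcongr
    linarith [hlam]
  have step2 := gam_key a b L d hg hh hL hd h1 h2
  have : gamSM g h = d ^ 2 / (a * b) := rfl
  rw [this]
  linarith
end

section
/- For z ∈ ℂ with Im z ≥ 0, the translation map σ_z : ℍ → ℍ, g ↦ z + g, satisfies γ(z+g, z+h) = γ(g,h)/((1+Im z/Im g)(1+Im z/Im h)); in particular σ_z is an isometry for γ if Im z = 0, and on the set {g ∈ ℍ : Im g ≤ C} it is a uniform contraction with contraction coefficient (1 + Im z / C)⁻² when Im z > 0. -/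
/-- For Im z ≥ 0, the translation g ↦ z + g satisfies the exact contraction
formula; it is a γ-isometry when Im z = 0, and a uniform contraction with
coefficient (1 + Im z/C)⁻² on {g : Im g ≤ C} when Im z > 0. -/
theorem gam_translation (z : ℂ) (hz : 0 ≤ z.im) (C : ℝ) (hC : 0 < C) :
    (∀ g h : ℂ, 0 < g.im → 0 < h.im →
      gamSM (z + g) (z + h) =
        gamSM g h / ((1 + z.im / g.im) * (1 + z.im / h.im))) ∧
    (z.im = 0 → ∀ g h : ℂ, 0 < g.im → 0 < h.im →
      gamSM (z + g) (z + h) = gamSM g h) ∧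
    (0 < z.im → ∀ g h : ℂ, 0 < g.im → 0 < h.im → g.im ≤ C → h.im ≤ C →
      gamSM (z + g) (z + h) ≤ ((1 + z.im / C) ^ 2)⁻¹ * gamSM g h) := by
  have key : ∀ g h : ℂ, 0 < g.im → 0 < h.im →
      gamSM (z + g) (z + h) =
        gamSM g h / ((1 + z.im / g.im) * (1 + z.im / h.im)) := by
    intro g h hg hh
    have hsub : z + g - (z + h) = g - h := by ring
    unfold gamSM
    rw [hsub, Complex.add_im, Complex.add_im, div_div]
    congr 1
    field_simp
    ring
  refine ⟨key, ?_, ?_⟩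
  · intro h0 g h hg hh
    rw [key g h hg hh, h0]
    simp
  · intro hz' g h hg hh hgC hhC
    rw [key g h hg hh]
    rw [div_eq_inv_mul]
    have hgam : 0 ≤ gamSM g h := by
      unfold gamSM
      positivity
    apply mul_le_mul_of_nonneg_right _ hgam
    rw [inv_le_inv₀ (by positivity) (by positivity)]
    rw [sq]
    apply mul_le_mul
    · exact add_le_add_right (div_le_div_of_nonneg_left hz'.le hg hgC) 1
    · exact add_le_add_right (div_le_div_of_nonneg_left hz'.le hh hhC) 1
    · positivity
    · positivity
end

section
/- Comparison of γ-contraction and hyperbolic contraction: let c₀ ∈ [0,1) and define c(r) = cosh⁻¹(c₀r + 1)/cosh⁻¹(r + 1) for r > 0. Then lim_{r→0} c(r) = √c₀, and for every r₀ > 0 one has sup_{r ∈ (0,r₀]} c(r) < 1. -/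
/-- The inverse hyperbolic cosine on [1,∞). -/
noncomputable def arcosh (x : ℝ) : ℝ :=
  Real.log (x + Real.sqrt (x ^ 2 - 1))

lemma arcosh_one : arcosh 1 = 0 := by simp [arcosh]

lemma base_pos {x : ℝ} (hx : 1 ≤ x) : 0 < x + Real.sqrt (x ^ 2 - 1) := by
  have := Real.sqrt_nonneg (x ^ 2 - 1); linarith

lemma arcosh_lt_arcosh {x y : ℝ} (hx : 1 ≤ x) (hxy : x < y) : arcosh x < arcosh y := by
  apply Real.log_lt_log (base_pos hx)
  have h1 : x ^ 2 - 1 ≤ y ^ 2 - 1 := by nlinarith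
  have := Real.sqrt_le_sqrt h1
  linarith

lemma arcosh_pos {x : ℝ} (hx : 1 < x) : 0 < arcosh x := by
  have := arcosh_lt_arcosh le_rfl hx
  rwa [arcosh_one] at this

lemma continuousAt_arcosh {x : ℝ} (hx : 1 ≤ x) : ContinuousAt arcosh x := by
  have h : ContinuousAt (fun y : ℝ => y + Real.sqrt (y ^ 2 - 1)) x := by fun_prop
  exact h.log (base_pos hx).ne'

lemma tendsto_arcosh_div_sqrt :
    Filter.Tendsto (fun x : ℝ => arcosh (1 + x) / Real.sqrt x)
      (nhdsWithin 0 (Set.Ioi 0)) (nhds (Real.sqrt 2)) := by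
  set t : ℝ → ℝ := fun x => x + Real.sqrt (x ^ 2 + 2 * x) with ht
  have htc : Continuous t := by fun_prop
  have h1 : Filter.Tendsto t (nhdsWithin 0 (Set.Ioi 0)) (nhdsWithin 0 (Set.Ioi 0)) := by
    rw [tendsto_nhdsWithin_iff]
    constructor
    · have h0 : t 0 = 0 := by simp [ht]
      have := (htc.tendsto 0).mono_left (nhdsWithin_le_nhds (s := Set.Ioi (0:ℝ)))
      rwa [h0] at this
    · filter_upwards [self_mem_nhdsWithin] with x hx
      have hx0 : (0:ℝ) < x := hx
      have : (0:ℝ) ≤ Real.sqrt (x ^ 2 + 2 * x) := Real.sqrt_nonneg _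
      exact Set.mem_Ioi.mpr (by simp only [ht]; nlinarith)
  have h2 : Filter.Tendsto (fun u : ℝ => Real.log (1 + u) / u)
      (nhdsWithin 0 (Set.Ioi 0)) (nhds 1) := by
    have hd : HasDerivAt Real.log 1 1 := by
      simpa using Real.hasDerivAt_log one_ne_zero
    have hs := hasDerivAt_iff_tendsto_slope.mp hd
    have hm : Filter.Tendsto (fun u : ℝ => 1 + u) (nhdsWithin 0 (Set.Ioi 0))
        (nhdsWithin 1 {1}ᶜ) := by
      rw [tendsto_nhdsWithin_iff]
      constructor
      · have : Filter.Tendsto (fun u : ℝ => 1 + u) (nhds 0) (nhds (1 + 0)) :=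
          (continuous_const.add continuous_id).tendsto (0:ℝ)
        rw [add_zero] at this
        exact this.mono_left nhdsWithin_le_nhds
      · filter_upwards [self_mem_nhdsWithin] with x hx
        have : (0:ℝ) < x := hx
        simp only [Set.mem_compl_iff, Set.mem_singleton_iff]
        intro h; linarith [h]
    refine (hs.comp hm).congr fun x => ?_
    simp [slope, Real.log_one]
    ring
  have h3 : Filter.Tendsto (fun x : ℝ => t x / Real.sqrt x)
      (nhdsWithin 0 (Set.Ioi 0)) (nhds (Real.sqrt 2)) := by
    have key : ∀ x ∈ Set.Ioi (0:ℝ), Real.sqrt x + Real.sqrt (x + 2) = t x / Real.sqrt x := by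
      intro x hx
      have hx0 : (0:ℝ) < x := hx
      have hsq : Real.sqrt (x ^ 2 + 2 * x) = Real.sqrt x * Real.sqrt (x + 2) := by
        rw [← Real.sqrt_mul hx0.le]; congr 1; ring
      have hne : Real.sqrt x ≠ 0 := by positivity
      simp only [ht, hsq]
      rw [add_div, Real.div_sqrt, mul_div_cancel_left₀ _ hne]
    have hcont : Filter.Tendsto (fun x : ℝ => Real.sqrt x + Real.sqrt (x + 2))
        (nhdsWithin 0 (Set.Ioi 0)) (nhds (Real.sqrt 2)) := by
      have hc : Continuous (fun x : ℝ => Real.sqrt x + Real.sqrt (x + 2)) := by fun_prop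
      have := (hc.tendsto 0).mono_left (nhdsWithin_le_nhds (s := Set.Ioi (0:ℝ)))
      simpa using this
    exact hcont.congr' (by filter_upwards [self_mem_nhdsWithin] with x hx using key x hx)
  have hmul := (h2.comp h1).mul h3
  rw [one_mul] at hmul
  apply hmul.congr'
  filter_upwards [self_mem_nhdsWithin] with x hx
  have hx0 : (0:ℝ) < x := hx
  have htpos : 0 < t x := by
    have : (0:ℝ) ≤ Real.sqrt (x ^ 2 + 2 * x) := Real.sqrt_nonneg _
    simp only [ht]; nlinarith
  have hne : Real.sqrt x ≠ 0 := by positivity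
  have harc : arcosh (1 + x) = Real.log (1 + t x) := by
    show Real.log ((1 + x) + Real.sqrt ((1 + x) ^ 2 - 1)) = _
    rw [show (1 + x) ^ 2 - 1 = x ^ 2 + 2 * x by ring]
    simp only [ht]; congr 1; ring
  simp only [Function.comp_apply, harc]
  field_simp

/-- For c₀ ∈ [0,1) and c(r) = cosh⁻¹(c₀r+1)/cosh⁻¹(r+1), one has
c(r) → √c₀ as r → 0⁺, and sup_{r ∈ (0,r₀]} c(r) < 1 for every r₀ > 0. -/
theorem arcosh_contraction_comparison (c₀ : ℝ) (hc₀ : 0 ≤ c₀) (hc₀' : c₀ < 1) :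
    Filter.Tendsto (fun r : ℝ => arcosh (c₀ * r + 1) / arcosh (r + 1))
      (nhdsWithin 0 (Set.Ioi 0)) (nhds (Real.sqrt c₀)) ∧
    ∀ r₀ : ℝ, 0 < r₀ →
      sSup ((fun r : ℝ => arcosh (c₀ * r + 1) / arcosh (r + 1)) '' Set.Ioc 0 r₀) < 1 := by
  set f : ℝ → ℝ := fun r => arcosh (c₀ * r + 1) / arcosh (r + 1) with hf
  rcases eq_or_lt_of_le hc₀ with hc | hc
  · -- c₀ = 0
    have hz : f = fun _ => 0 := by
      funext r; simp [hf, ← hc, arcosh_one]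
    constructor
    · rw [hz, ← hc, Real.sqrt_zero]
      exact tendsto_const_nhds
    · intro r₀ hr₀
      rw [hz]
      have himg : ((fun _ : ℝ => (0:ℝ)) '' Set.Ioc 0 r₀) = {0} :=
        Set.Nonempty.image_const (s := Set.Ioc (0:ℝ) r₀) ⟨r₀, ⟨hr₀, le_rfl⟩⟩ 0
      rw [himg, csSup_singleton]
      norm_num
  · -- 0 < c₀
    have hsc : (0:ℝ) < Real.sqrt c₀ := Real.sqrt_pos.mpr hc
    have hs2 : (0:ℝ) < Real.sqrt 2 := by positivity
    -- the limit
    have htend : Filter.Tendsto f (nhdsWithin 0 (Set.Ioi 0)) (nhds (Real.sqrt c₀)) := by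
      set A : ℝ → ℝ := fun x => arcosh (1 + x) / Real.sqrt x with hA
      have hmap : Filter.Tendsto (fun r : ℝ => c₀ * r) (nhdsWithin 0 (Set.Ioi 0))
          (nhdsWithin 0 (Set.Ioi 0)) := by
        rw [tendsto_nhdsWithin_iff]
        constructor
        · have : Filter.Tendsto (fun r : ℝ => c₀ * r) (nhds 0) (nhds (c₀ * 0)) :=
            (continuous_const.mul continuous_id).tendsto 0
          rw [mul_zero] at this
          exact this.mono_left nhdsWithin_le_nhds
        · filter_upwards [self_mem_nhdsWithin] with r hr
          exact Set.mem_Ioi.mpr (mul_pos hc hr)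
      have hinv : Filter.Tendsto (fun r : ℝ => (A r)⁻¹) (nhdsWithin 0 (Set.Ioi 0))
          (nhds (Real.sqrt 2)⁻¹) := tendsto_arcosh_div_sqrt.inv₀ hs2.ne'
      have hcomb := ((tendsto_arcosh_div_sqrt.comp hmap).mul
        (tendsto_const_nhds (x := Real.sqrt c₀))).mul hinv
      have hval : Real.sqrt 2 * Real.sqrt c₀ * (Real.sqrt 2)⁻¹ = Real.sqrt c₀ := by
        field_simp
      rw [hval] at hcomb
      apply hcomb.congr'
      filter_upwards [self_mem_nhdsWithin] with r hr
      have hr0 : (0:ℝ) < r := hr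
      have hd : 0 < arcosh (r + 1) := arcosh_pos (by linarith)
      have hsr : (0:ℝ) < Real.sqrt r := Real.sqrt_pos.mpr hr0
      have hsqm : Real.sqrt (c₀ * r) = Real.sqrt c₀ * Real.sqrt r := Real.sqrt_mul hc.le r
      simp only [Function.comp_apply, hA, hf, hsqm]
      rw [show (1 : ℝ) + c₀ * r = c₀ * r + 1 by ring, show (1:ℝ) + r = r + 1 by ring]
      rw [inv_div]
      field_simp
    refine ⟨htend, fun r₀ hr₀ => ?_⟩
    -- extended function
    set F : ℝ → ℝ := fun r => if r = 0 then Real.sqrt c₀ else f r with hF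
    have hFf : ∀ r : ℝ, r ≠ 0 → F r = f r := fun r hr => if_neg hr
    have hF0 : F 0 = Real.sqrt c₀ := if_pos rfl
    have hFc : ContinuousOn F (Set.Icc 0 r₀) := by
      intro x hx
      rcases eq_or_lt_of_le hx.1 with hx0 | hx0
      · -- x = 0
        subst hx0
        rw [ContinuousWithinAt, hF0]
        have hsub : Set.Icc (0:ℝ) r₀ ⊆ insert 0 (Set.Ioi 0) := by
          intro y hy
          rcases eq_or_lt_of_le hy.1 with h | h
          · exact Or.inl h.symm
          · exact Or.inr h
        apply Filter.Tendsto.mono_left _ (nhdsWithin_mono 0 hsub)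
        rw [nhdsWithin_insert, Filter.tendsto_sup]
        constructor
        · have := tendsto_pure_nhds F 0
          rwa [hF0] at this
        · apply htend.congr'
          filter_upwards [self_mem_nhdsWithin] with r hr
          exact (hFf r (ne_of_gt hr)).symm
      · -- 0 < x
        have hcx : ContinuousAt f x := by
          have h1 : ContinuousAt (fun r : ℝ => arcosh (c₀ * r + 1)) x := by
            have : ContinuousAt (fun r : ℝ => c₀ * r + 1) x := by fun_prop
            exact (continuousAt_arcosh (by nlinarith)).comp this
          have h2 : ContinuousAt (fun r : ℝ => arcosh (r + 1)) x := by
            have : ContinuousAt (fun r : ℝ => r + 1) x := by fun_prop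
            exact (continuousAt_arcosh (by linarith)).comp this
          exact h1.div h2 (arcosh_pos (by linarith)).ne'
        have heq : f =ᶠ[nhds x] F := by
          filter_upwards [eventually_ne_nhds hx0.ne'] with y hy
          exact (hFf y hy).symm
        exact (hcx.congr heq).continuousWithinAt
    obtain ⟨x₀, hx₀mem, hmax⟩ := isCompact_Icc.exists_isMaxOn
      ⟨0, le_rfl, hr₀.le⟩ hFc
    have hFx₀ : F x₀ < 1 := by
      by_cases hx0 : x₀ = 0
      · rw [hx0, hF0]
        calc Real.sqrt c₀ < Real.sqrt 1 := Real.sqrt_lt_sqrt hc₀ hc₀'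
        _ = 1 := Real.sqrt_one
      · have hx₀pos : 0 < x₀ := lt_of_le_of_ne hx₀mem.1 (Ne.symm hx0)
        rw [hFf x₀ hx0]
        rw [hf]
        exact (div_lt_one (arcosh_pos (by linarith))).mpr
          (arcosh_lt_arcosh (by nlinarith) (by nlinarith))
    have hbound : ∀ y ∈ f '' Set.Ioc 0 r₀, y ≤ F x₀ := by
      rintro y ⟨r, hr, rfl⟩
      rw [← hFf r (ne_of_gt hr.1)]
      exact hmax ⟨hr.1.le, hr.2⟩
    exact lt_of_le_of_lt (csSup_le ⟨f r₀, r₀, ⟨hr₀, le_rfl⟩, rfl⟩ hbound) hFx₀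
end

section
/- If φ : ℍ → ℍ satisfies γ(φ(g),φ(h)) ≤ c₀·γ(g,h) for all g,h in a set K with γ-diameter at most 2r₀, where c₀ ∈ [0,1), then φ is a uniform contraction on K with respect to the hyperbolic metric dist(g,h) = cosh⁻¹(γ(g,h)/2 + 1), with a contraction coefficient depending only on r₀ and c₀. -/
/-- The hyperbolic metric on ℍ, written via γ. -/
noncomputable def hypDist (g h : ℂ) : ℝ :=
  arcosh (gamSM g h / 2 + 1)

lemma sinh_sub_le {a b : ℝ} (hb : 0 ≤ b) (hba : b ≤ a) :
    Real.sinh a - Real.sinh b ≤ (a - b) * Real.cosh a := by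
  have hmono : MonotoneOn (fun x => x * Real.cosh a - Real.sinh x) (Set.Icc b a) := by
    apply monotoneOn_of_deriv_nonneg (convex_Icc b a)
    · fun_prop
    · fun_prop
    · intro x hx
      rw [interior_Icc] at hx
      have hd : deriv (fun x => x * Real.cosh a - Real.sinh x) x
          = Real.cosh a - Real.cosh x := by
        have h1 : HasDerivAt (fun x : ℝ => x * Real.cosh a - Real.sinh x)
            (1 * Real.cosh a - Real.cosh x) x :=
          ((hasDerivAt_id x).mul_const _).sub (Real.hasDerivAt_sinh x)
        simpa using h1.deriv
      rw [hd]
      have : Real.cosh x ≤ Real.cosh a := by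
        rw [Real.cosh_le_cosh, abs_of_nonneg (le_trans hb hx.1.le),
          abs_of_nonneg (le_trans hb (le_trans hx.1.le hx.2.le))]
        exact hx.2.le
      linarith
  have := hmono (Set.left_mem_Icc.2 hba) (Set.right_mem_Icc.2 hba) hba
  simp only at this
  nlinarith

lemma arcosh_nonneg {y : ℝ} (hy : 1 ≤ y) : 0 ≤ arcosh y := by
  unfold arcosh
  apply Real.log_nonneg
  have : (0:ℝ) ≤ Real.sqrt (y ^ 2 - 1) := Real.sqrt_nonneg _
  linarith

lemma cosh_arcosh {y : ℝ} (hy : 1 ≤ y) : Real.cosh (arcosh y) = y := by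
  have hs : Real.sqrt (y ^ 2 - 1) ^ 2 = y ^ 2 - 1 :=
    Real.sq_sqrt (by nlinarith)
  have hsn : 0 ≤ Real.sqrt (y ^ 2 - 1) := Real.sqrt_nonneg _
  have hz : 0 < y + Real.sqrt (y ^ 2 - 1) := by linarith
  unfold arcosh
  rw [Real.cosh_eq, Real.exp_log hz, Real.exp_neg, Real.exp_log hz]
  field_simp
  nlinarith

lemma arcosh_le_arcosh {y z : ℝ} (hy : 1 ≤ y) (hz : y ≤ z) : arcosh y ≤ arcosh z := by
  have h1 : Real.cosh (arcosh y) ≤ Real.cosh (arcosh z) := by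
    rw [cosh_arcosh hy, cosh_arcosh (hy.trans hz)]; exact hz
  rw [Real.cosh_le_cosh, abs_of_nonneg (arcosh_nonneg hy),
    abs_of_nonneg (arcosh_nonneg (hy.trans hz))] at h1
  exact h1

/-- The key analytic estimate: if `cosh v - 1 ≤ c * (cosh u - 1)` with
`cosh u - 1 ≤ r₀`, then `v ≤ (1 - √2(1-√c)/√(r₀+2)) u`. -/
lemma key_lemma {c r₀ u v : ℝ} (hc : 0 ≤ c) (hc1 : c ≤ 1) (hr : 0 ≤ r₀)
    (hv : 0 ≤ v) (hvu : v ≤ u)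
    (hur : Real.cosh u - 1 ≤ r₀)
    (hcontr : Real.cosh v - 1 ≤ c * (Real.cosh u - 1)) :
    v ≤ (1 - Real.sqrt 2 * (1 - Real.sqrt c) / Real.sqrt (r₀ + 2)) * u := by
  set a := u / 2 with ha_def
  set b := v / 2 with hb_def
  have hb : 0 ≤ b := by positivity
  have hba : b ≤ a := by simp only [ha_def, hb_def]; linarith
  have ha : 0 ≤ a := hb.trans hba
  set s := Real.sqrt c with hs_def
  set t := Real.sqrt (r₀ + 2) with ht_def
  set k2 := Real.sqrt 2 with hk2_def
  have ht : 0 < t := Real.sqrt_pos.2 (by linarith)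
  have hk2 : 0 < k2 := Real.sqrt_pos.2 (by norm_num)
  have hs0 : 0 ≤ s := Real.sqrt_nonneg _
  have hs1 : s ≤ 1 := by
    rw [hs_def, show (1:ℝ) = Real.sqrt 1 by simp]
    exact Real.sqrt_le_sqrt hc1
  -- double-angle expansions
  have hdu : Real.cosh u - 1 = 2 * Real.sinh a ^ 2 := by
    have h1 := Real.cosh_two_mul a
    have h2 := Real.cosh_sq a
    rw [show 2 * a = u by rw [ha_def]; ring] at h1
    rw [h1, h2]; ring
  have hdv : Real.cosh v - 1 = 2 * Real.sinh b ^ 2 := by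
    have h1 := Real.cosh_two_mul b
    have h2 := Real.cosh_sq b
    rw [show 2 * b = v by rw [hb_def]; ring] at h1
    rw [h1, h2]; ring
  have hsb2 : Real.sinh b ^ 2 ≤ c * Real.sinh a ^ 2 := by
    rw [hdu, hdv] at hcontr; linarith
  have hsbnn : 0 ≤ Real.sinh b := Real.sinh_nonneg_iff.2 hb
  have hsann : 0 ≤ Real.sinh a := Real.sinh_nonneg_iff.2 ha
  have H2 : Real.sinh b ≤ s * Real.sinh a := by
    have := Real.sqrt_le_sqrt hsb2
    rwa [Real.sqrt_sq hsbnn, Real.sqrt_mul hc, Real.sqrt_sq hsann] at this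
  have H1 : Real.sinh a - Real.sinh b ≤ (a - b) * Real.cosh a := sinh_sub_le hb hba
  have H3 : a ≤ Real.sinh a := Real.self_le_sinh_iff.2 ha
  have hcoshpos : 0 < Real.cosh a := Real.cosh_pos a
  -- cosh a * √2 ≤ √(r₀+2)
  have H4 : Real.cosh a * k2 ≤ t := by
    have hsq : (Real.cosh a * k2) ^ 2 ≤ r₀ + 2 := by
      have h2 : Real.cosh a ^ 2 = Real.sinh a ^ 2 + 1 := Real.cosh_sq a
      have hk22 : k2 ^ 2 = 2 := Real.sq_sqrt (by norm_num)
      have : 2 * Real.sinh a ^ 2 ≤ r₀ := by rw [← hdu]; exact hur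
      nlinarith
    calc Real.cosh a * k2 = Real.sqrt ((Real.cosh a * k2) ^ 2) :=
          (Real.sqrt_sq (by positivity)).symm
      _ ≤ t := Real.sqrt_le_sqrt hsq
  -- assemble
  have hA : (1 - s) * u ≤ (u - v) * Real.cosh a := by
    have h0 : 0 ≤ (1 - s) * (Real.sinh a - a) := by nlinarith
    have h1 : (u - v) * Real.cosh a = 2 * ((a - b) * Real.cosh a) := by
      rw [ha_def, hb_def]; ring
    nlinarith
  have hB : (u - v) * (Real.cosh a * k2) ≤ (u - v) * t :=
    mul_le_mul_of_nonneg_left H4 (by linarith)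
  have hC : k2 * ((1 - s) * u) ≤ (u - v) * t := by
    have := mul_le_mul_of_nonneg_left hA hk2.le
    nlinarith
  have hdiv : k2 * ((1 - s) * u) / t ≤ u - v := (div_le_iff₀ ht).2 hC
  have hexp : (1 - k2 * (1 - s) / t) * u = u - k2 * ((1 - s) * u) / t := by ring
  rw [hexp]
  linarith

/-- A uniform γ-contraction on a set of bounded γ-diameter is a uniform
contraction for the hyperbolic metric, with a coefficient depending only on
the diameter bound and the γ-contraction coefficient. -/
theorem hypDist_uniform_contraction_of_gam (c₀ r₀ : ℝ)
    (hc₀ : 0 ≤ c₀) (hc₀' : c₀ < 1) (hr₀ : 0 < r₀) :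
    ∃ c₁ : ℝ, 0 ≤ c₁ ∧ c₁ < 1 ∧
      ∀ (K : Set ℂ) (φ : ℂ → ℂ),
        (∀ g ∈ K, 0 < g.im) →
        (∀ g ∈ K, 0 < (φ g).im) →
        (∀ g ∈ K, ∀ h ∈ K, gamSM g h ≤ 2 * r₀) →
        (∀ g ∈ K, ∀ h ∈ K, gamSM (φ g) (φ h) ≤ c₀ * gamSM g h) →
        ∀ g ∈ K, ∀ h ∈ K, hypDist (φ g) (φ h) ≤ c₁ * hypDist g h := by
  refine ⟨1 - Real.sqrt 2 * (1 - Real.sqrt c₀) / Real.sqrt (r₀ + 2), ?_, ?_, ?_⟩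
  · -- 0 ≤ c₁
    have h1 : Real.sqrt c₀ ≥ 0 := Real.sqrt_nonneg _
    have h2 : Real.sqrt 2 ≤ Real.sqrt (r₀ + 2) := Real.sqrt_le_sqrt (by linarith)
    have ht : 0 < Real.sqrt (r₀ + 2) := Real.sqrt_pos.2 (by linarith)
    have h3 : Real.sqrt 2 * (1 - Real.sqrt c₀) ≤ Real.sqrt (r₀ + 2) := by
      have hs1 : 1 - Real.sqrt c₀ ≤ 1 := by linarith
      nlinarith [Real.sqrt_nonneg 2]
    have := (div_le_one ht).2 h3
    linarith
  · -- c₁ < 1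
    have hs : Real.sqrt c₀ < 1 := by
      rw [show (1:ℝ) = Real.sqrt 1 by simp]
      exact Real.sqrt_lt_sqrt hc₀ hc₀'
    have : 0 < Real.sqrt 2 * (1 - Real.sqrt c₀) / Real.sqrt (r₀ + 2) := by
      apply div_pos (mul_pos (Real.sqrt_pos.2 (by norm_num)) (by linarith))
        (Real.sqrt_pos.2 (by linarith))
    linarith
  · intro K φ hK hKφ hdiam hcontr g hg h hh
    have hγnn : 0 ≤ gamSM g h := by
      unfold gamSM
      exact div_nonneg (by positivity) (mul_pos (hK g hg) (hK h hh)).le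
    have hγ'nn : 0 ≤ gamSM (φ g) (φ h) := by
      unfold gamSM
      exact div_nonneg (by positivity) (mul_pos (hKφ g hg) (hKφ h hh)).le
    have hγc : gamSM (φ g) (φ h) ≤ c₀ * gamSM g h := hcontr g hg h hh
    have hγle : gamSM (φ g) (φ h) ≤ gamSM g h := by nlinarith
    have hy1 : (1:ℝ) ≤ gamSM (φ g) (φ h) / 2 + 1 := by linarith
    have hy2 : (1:ℝ) ≤ gamSM g h / 2 + 1 := by linarith
    have hv : 0 ≤ hypDist (φ g) (φ h) := arcosh_nonneg hy1
    have hvu : hypDist (φ g) (φ h) ≤ hypDist g h :=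
      arcosh_le_arcosh hy1 (by linarith)
    have hcu : Real.cosh (hypDist g h) = gamSM g h / 2 + 1 := cosh_arcosh hy2
    have hcv : Real.cosh (hypDist (φ g) (φ h)) = gamSM (φ g) (φ h) / 2 + 1 :=
      cosh_arcosh hy1
    have hur : Real.cosh (hypDist g h) - 1 ≤ r₀ := by
      rw [hcu]; have := hdiam g hg h hh; linarith
    have hco : Real.cosh (hypDist (φ g) (φ h)) - 1
        ≤ c₀ * (Real.cosh (hypDist g h) - 1) := by
      rw [hcu, hcv]; linarith
    exact key_lemma hc₀ hc₀'.le hr₀.le hv hvu hur hco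
end

section
/- Limit point principle: let (X_j, d_j), j ∈ ℕ, be a sequence of compact semi-metric spaces with diameters x_j, and φ_j : X_{j+1} → X_j uniform contractions with coefficients c_j ∈ [0,1). If for some β > 0, limsup_{n→∞} (1/x_n^β) · Σ_{j=1}^{n-1} (1 - c_j^β)/c_j^β = ∞, then the decreasing intersection ⋂_{n≥j} φ_j ∘ ⋯ ∘ φ_n(X_{n+1}) consists of a single point h_j for each j, and h_j = lim_{n→∞} φ_j∘⋯∘φ_n(g_n) for every choice g_n ∈ X_n. -/
open Filter Set

private lemma ball_lemma {Y : Type*} [TopologicalSpace Y] [CompactSpace Y]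
    (d : Y → Y → ℝ) (hcont : Continuous fun p : Y × Y => d p.1 p.2)
    (hnn : ∀ x y, 0 ≤ d x y) (hz : ∀ x y, d x y = 0 ↔ x = y)
    (x : Y) (U : Set Y) (hU : IsOpen U) (hx : x ∈ U) :
    ∃ ε > 0, ∀ y, d x y < ε → y ∈ U := by
  have hf : Continuous fun y => d x y :=
    hcont.comp (continuous_const.prodMk continuous_id)
  rcases eq_empty_or_nonempty Uᶜ with hK | hK
  · refine ⟨1, one_pos, fun y _ => ?_⟩
    by_contra hy
    exact (Set.eq_empty_iff_forall_notMem.mp hK y) (by simpa using hy)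
  · obtain ⟨y₀, hy₀, hmin⟩ :=
      (hU.isClosed_compl.isCompact).exists_isMinOn hK hf.continuousOn
    refine ⟨d x y₀, ?_, ?_⟩
    · rcases lt_or_eq_of_le (hnn x y₀) with hlt | heq
      · exact hlt
      · exact absurd ((hz x y₀).mp heq.symm ▸ hx) hy₀
    · intro y hy
      by_contra hyU
      exact absurd (hmin hyU) (not_le.mpr hy)

private lemma contraction_continuous {Y Z : Type*} [TopologicalSpace Y] [TopologicalSpace Z]
    [CompactSpace Z]
    (dY : Y → Y → ℝ) (dZ : Z → Z → ℝ)
    (hYcont : Continuous fun p : Y × Y => dY p.1 p.2)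
    (hZcont : Continuous fun p : Z × Z => dZ p.1 p.2)
    (hZnn : ∀ x y, 0 ≤ dZ x y) (hZz : ∀ x y, dZ x y = 0 ↔ x = y)
    (f : Y → Z) (c : ℝ) (hc : 0 ≤ c)
    (hf : ∀ x y, dZ (f x) (f y) ≤ c * dY x y)
    (hYz : ∀ x, dY x x = 0) :
    Continuous f := by
  rw [continuous_iff_continuousAt]
  intro x U hU
  obtain ⟨V, hVU, hVopen, hxV⟩ := mem_nhds_iff.mp hU
  obtain ⟨ε, hε, hball⟩ := ball_lemma dZ hZcont hZnn hZz (f x) V hVopen hxV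
  have hc1 : (0:ℝ) < c + 1 := by linarith
  have hW : IsOpen {y : Y | dY x y < ε / (c + 1)} := by
    have hcnt : Continuous fun y => dY x y :=
      hYcont.comp (continuous_const.prodMk continuous_id)
    exact isOpen_lt hcnt continuous_const
  have hxW : x ∈ {y : Y | dY x y < ε / (c + 1)} := by
    simp only [mem_setOf_eq, hYz x]
    positivity
  rw [Filter.mem_map]
  refine Filter.mem_of_superset (hW.mem_nhds hxW) ?_
  intro y hy
  simp only [mem_setOf_eq] at hy
  apply mem_of_subset_of_mem hVU
  apply hball
  calc dZ (f x) (f y) ≤ c * dY x y := hf x y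
    _ ≤ c * (ε / (c + 1)) := mul_le_mul_of_nonneg_left hy.le hc
    _ < ε := by
        rw [mul_div_assoc', div_lt_iff₀ hc1]
        nlinarith

private lemma key_lemma_s12 (xd c : ℕ → ℝ) (hxd0 : ∀ n, 0 ≤ xd n)
    (hc0 : ∀ j, 0 ≤ c j) (hc1 : ∀ j, c j < 1)
    (β : ℝ) (hβ : 0 < β)
    (hdiv : ∀ M : ℝ, ∃ᶠ n in atTop,
      M ≤ (1 / xd n ^ β) * ∑ j ∈ Finset.Ico 1 n, (1 - c j ^ β) / c j ^ β)
    (j : ℕ) (ε : ℝ) (hε : 0 < ε) :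
    ∃ n, j ≤ n ∧ (∏ i ∈ Finset.Icc j n, c i) * xd (n + 1) < ε := by
  by_contra hcon
  push_neg at hcon
  have hQnn : ∀ m n : ℕ, (0:ℝ) ≤ ∏ i ∈ Finset.Ico m n, c i :=
    fun m n => Finset.prod_nonneg fun i _ => hc0 i
  have hcpos : ∀ i, j ≤ i → 0 < c i := by
    intro i hi
    by_contra hneg
    have hci : c i = 0 := le_antisymm (not_lt.mp hneg) (hc0 i)
    have hx := hcon i hi
    rw [Finset.prod_eq_zero (Finset.mem_Icc.mpr ⟨hi, le_rfl⟩) hci, zero_mul] at hx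
    linarith
  have ha0 : ∀ i : ℕ, 0 ≤ c i ^ β := fun i => Real.rpow_nonneg (hc0 i) β
  have ha1 : ∀ i : ℕ, c i ^ β < 1 := fun i => Real.rpow_lt_one (hc0 i) (hc1 i) hβ
  have hapos : ∀ i, j ≤ i → 0 < c i ^ β := fun i hi => Real.rpow_pos_of_pos (hcpos i hi) β
  have htnn : ∀ k : ℕ, (0:ℝ) ≤ (1 - c k ^ β) / c k ^ β :=
    fun k => div_nonneg (by linarith [ha1 k]) (ha0 k)
  set C : ℝ := ∑ k ∈ Finset.Ico 1 j, (1 - c k ^ β) / c k ^ β with hC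
  have hC0 : 0 ≤ C := Finset.sum_nonneg fun k _ => htnn k
  have hεβ : 0 < ε ^ β := Real.rpow_pos_of_pos hε β
  have hbound : ∀ n, j + 1 ≤ n →
      (1 / xd n ^ β) * ∑ k ∈ Finset.Ico 1 n, (1 - c k ^ β) / c k ^ β ≤ (C + 1) / ε ^ β := by
    intro n hn
    set F : ℕ → ℝ := fun k => ∏ i ∈ Finset.Ico k n, c i ^ β with hF
    have hFnn : ∀ k, 0 ≤ F k := fun k => Finset.prod_nonneg fun i _ => ha0 i
    have hFle1 : ∀ k, F k ≤ 1 := fun k =>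
      Finset.prod_le_one (fun i _ => ha0 i) (fun i _ => (ha1 i).le)
    have hIccIco : Finset.Icc j (n - 1) = Finset.Ico j n := by
      rw [← Finset.Ico_add_one_right_eq_Icc]; congr 1; omega
    have hmain : ε ^ β ≤ F j * xd n ^ β := by
      have h1 := hcon (n - 1) (by omega)
      rw [show n - 1 + 1 = n by omega, hIccIco] at h1
      calc ε ^ β ≤ ((∏ i ∈ Finset.Ico j n, c i) * xd n) ^ β :=
            Real.rpow_le_rpow hε.le h1 hβ.le
        _ = (∏ i ∈ Finset.Ico j n, c i) ^ β * xd n ^ β :=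
            Real.mul_rpow (hQnn j n) (hxd0 n)
        _ = F j * xd n ^ β := by
            rw [← Real.finset_prod_rpow _ _ (fun i _ => hc0 i)]
    have hxdpos : 0 < xd n ^ β := by
      nlinarith [hFnn j, hεβ, hmain, Real.rpow_nonneg (hxd0 n) β, hFle1 j]
    have hinv : 1 / xd n ^ β ≤ F j / ε ^ β := by
      rw [div_le_div_iff₀ hxdpos hεβ]
      linarith
    have hT : ∑ k ∈ Finset.Ico 1 n, (1 - c k ^ β) / c k ^ β
        ≤ C + ∑ k ∈ Finset.Ico j n, (1 - c k ^ β) / c k ^ β := by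
      rcases le_or_gt 1 j with hj1 | hj0
      · rw [hC, Finset.sum_Ico_consecutive _ hj1 (by omega)]
      · obtain rfl : j = 0 := by omega
        have hss : Finset.Ico 1 n ⊆ Finset.Ico 0 n := by
          apply Finset.Ico_subset_Ico <;> omega
        have hsub := Finset.sum_le_sum_of_subset_of_nonneg hss
          (fun k _ _ => htnn k)
        simp only [hC, Finset.Ico_self, Finset.sum_empty]
        linarith
    have hTnn : (0:ℝ) ≤ ∑ k ∈ Finset.Ico 1 n, (1 - c k ^ β) / c k ^ β :=
      Finset.sum_nonneg fun k _ => htnn k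
    have hUnn : (0:ℝ) ≤ ∑ k ∈ Finset.Ico j n, (1 - c k ^ β) / c k ^ β :=
      Finset.sum_nonneg fun k _ => htnn k
    have htel : F j * ∑ k ∈ Finset.Ico j n, (1 - c k ^ β) / c k ^ β ≤ 1 := by
      rw [Finset.mul_sum]
      have hterm : ∀ k ∈ Finset.Ico j n,
          F j * ((1 - c k ^ β) / c k ^ β) ≤ F (k + 1) - F k := by
        intro k hk
        rw [Finset.mem_Ico] at hk
        have hFk : F k = c k ^ β * F (k + 1) :=
          Finset.prod_eq_prod_Ico_succ_bot hk.2 _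
        have hFj : F j = (∏ i ∈ Finset.Ico j k, c i ^ β) * F k :=
          (Finset.prod_Ico_consecutive _ hk.1 (by omega)).symm
        have hple1 : (∏ i ∈ Finset.Ico j k, c i ^ β) ≤ 1 :=
          Finset.prod_le_one (fun i _ => ha0 i) (fun i _ => (ha1 i).le)
        have hpnn : (0:ℝ) ≤ ∏ i ∈ Finset.Ico j k, c i ^ β :=
          Finset.prod_nonneg fun i _ => ha0 i
        have h2 : F j * ((1 - c k ^ β) / c k ^ β) ≤ F k * ((1 - c k ^ β) / c k ^ β) := by
          rw [hFj]
          exact mul_le_mul_of_nonneg_right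
            (by nlinarith [hFnn k]) (htnn k)
        have h3 : F k * ((1 - c k ^ β) / c k ^ β) = (1 - c k ^ β) * F (k + 1) := by
          have hne : c k ^ β ≠ 0 := (hapos k hk.1).ne'
          rw [hFk]
          field_simp
        have h4 : (1 - c k ^ β) * F (k + 1) = F (k + 1) - F k := by
          rw [hFk]; ring
        linarith
      calc ∑ k ∈ Finset.Ico j n, F j * ((1 - c k ^ β) / c k ^ β)
          ≤ ∑ k ∈ Finset.Ico j n, (F (k + 1) - F k) :=
            Finset.sum_le_sum hterm
        _ = F n - F j := by
            rw [Finset.sum_Ico_eq_sub _ (by omega : j ≤ n),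
              Finset.sum_range_sub F, Finset.sum_range_sub F]
            ring
        _ ≤ 1 := by
            have hFn : F n = 1 := by simp [hF]
            linarith [hFnn j]
    calc (1 / xd n ^ β) * ∑ k ∈ Finset.Ico 1 n, (1 - c k ^ β) / c k ^ β
        ≤ (F j / ε ^ β) * ∑ k ∈ Finset.Ico 1 n, (1 - c k ^ β) / c k ^ β :=
          mul_le_mul_of_nonneg_right hinv hTnn
      _ = (F j * ∑ k ∈ Finset.Ico 1 n, (1 - c k ^ β) / c k ^ β) / ε ^ β := by ring
      _ ≤ (F j * (C + ∑ k ∈ Finset.Ico j n, (1 - c k ^ β) / c k ^ β)) / ε ^ β := by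
          rw [div_le_div_iff₀ hεβ hεβ]
          nlinarith [mul_le_mul_of_nonneg_left hT (hFnn j), hεβ]
      _ ≤ (C + 1) / ε ^ β := by
          have h5 : F j * C ≤ C := by nlinarith [hFle1 j, hC0, hFnn j]
          rw [div_le_div_iff₀ hεβ hεβ]
          nlinarith [htel]
  obtain ⟨n, hMn, hn⟩ :=
    ((hdiv ((C + 1) / ε ^ β + 1)).and_eventually (eventually_ge_atTop (j + 1))).exists
  have hb := hbound n hn
  linarith

/-- Limit point principle: given a sequence of compact semi-metric spaces
(X_j, d_j) with diameters x_j and uniform contractions φ_j : X_{j+1} → X_j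
with coefficients c_j ∈ [0,1), if for some β > 0 the quantity
(1/x_n^β)·Σ_{j=1}^{n-1}(1-c_j^β)/c_j^β is unbounded along a subsequence, then
the nested intersections ⋂_{n≥j} φ_j∘⋯∘φ_n(X_{n+1}) are singletons {h_j}, and
h_j is the limit of φ_j∘⋯∘φ_n(g_n) for arbitrary g_n ∈ X_{n+1}. -/
theorem limit_point_principle
    (X : ℕ → Type*) [∀ j, TopologicalSpace (X j)] [∀ j, CompactSpace (X j)]
    [∀ j, T2Space (X j)] [∀ j, Nonempty (X j)]
    (d : ∀ j, X j → X j → ℝ)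
    (hd_cont : ∀ j, Continuous (fun p : X j × X j => d j p.1 p.2))
    (hd_nonneg : ∀ j (x y : X j), 0 ≤ d j x y)
    (hd_symm : ∀ j (x y : X j), d j x y = d j y x)
    (hd_eq_zero : ∀ j (x y : X j), d j x y = 0 ↔ x = y)
    (xd : ℕ → ℝ) (hxd : ∀ n, IsLUB {r : ℝ | ∃ a b : X n, d n a b = r} (xd n))
    (c : ℕ → ℝ) (hc0 : ∀ j, 0 ≤ c j) (hc1 : ∀ j, c j < 1)
    (φ : ∀ j, X (j + 1) → X j)
    (hφ : ∀ j (x y : X (j + 1)), d j (φ j x) (φ j y) ≤ c j * d (j + 1) x y)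
    (β : ℝ) (hβ : 0 < β)
    (hdiv : ∀ M : ℝ, ∃ᶠ n in atTop,
      M ≤ (1 / xd n ^ β) * ∑ j ∈ Finset.Ico 1 n, (1 - c j ^ β) / c j ^ β)
    (Φ : ∀ j n, X (n + 1) → X j)
    (hΦ₁ : ∀ j, Φ j j = φ j)
    (hΦ₂ : ∀ j n, j ≤ n → ∀ g : X (n + 2), Φ j (n + 1) g = Φ j n (φ (n + 1) g)) :
    ∃ h : ∀ j, X j,
      (∀ j, (⋂ n ∈ {n : ℕ | j ≤ n}, Set.range (Φ j n)) = {h j}) ∧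
      ∀ g : ∀ n, X n, ∀ j,
        Tendsto (fun n => d j (h j) (Φ j (n + j) (g (n + j + 1)))) atTop (nhds 0) := by
  have hxd0 : ∀ n, 0 ≤ xd n := by
    intro n
    have h0 : d n (Classical.arbitrary (X n)) (Classical.arbitrary (X n)) = 0 :=
      (hd_eq_zero n _ _).mpr rfl
    have hle := (hxd n).1 ⟨Classical.arbitrary (X n), Classical.arbitrary (X n), rfl⟩
    linarith
  have hdle : ∀ n (x y : X n), d n x y ≤ xd n := fun n x y => (hxd n).1 ⟨x, y, rfl⟩
  have hφcont : ∀ k, Continuous (φ k) := fun k =>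
    contraction_continuous (d (k + 1)) (d k) (hd_cont (k + 1)) (hd_cont k)
      (hd_nonneg k) (hd_eq_zero k) (φ k) (c k) (hc0 k) (hφ k)
      (fun x => (hd_eq_zero (k + 1) x x).mpr rfl)
  have hΦcont : ∀ j n, j ≤ n → Continuous (Φ j n) := by
    intro j n hn
    induction n, hn using Nat.le_induction with
    | base => rw [hΦ₁]; exact hφcont j
    | succ n hn ih =>
      have he : Φ j (n + 1) = Φ j n ∘ φ (n + 1) := funext (hΦ₂ j n hn)
      rw [he]; exact ih.comp (hφcont (n + 1))
  have hΦbnd : ∀ j n, j ≤ n → ∀ x y : X (n + 1),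
      d j (Φ j n x) (Φ j n y) ≤ (∏ i ∈ Finset.Icc j n, c i) * d (n + 1) x y := by
    intro j n hn
    induction n, hn using Nat.le_induction with
    | base =>
      intro x y
      rw [hΦ₁, Finset.Icc_self, Finset.prod_singleton]
      exact hφ j x y
    | succ n hn ih =>
      intro x y
      rw [hΦ₂ j n hn x, hΦ₂ j n hn y]
      have hpnn : (0:ℝ) ≤ ∏ i ∈ Finset.Icc j n, c i :=
        Finset.prod_nonneg fun i _ => hc0 i
      calc d j (Φ j n (φ (n + 1) x)) (Φ j n (φ (n + 1) y))
          ≤ (∏ i ∈ Finset.Icc j n, c i) * d (n + 1) (φ (n + 1) x) (φ (n + 1) y) := ih _ _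
        _ ≤ (∏ i ∈ Finset.Icc j n, c i) * (c (n + 1) * d (n + 2) x y) :=
            mul_le_mul_of_nonneg_left (hφ (n + 1) x y) hpnn
        _ = (∏ i ∈ Finset.Icc j (n + 1), c i) * d (n + 2) x y := by
            rw [Finset.prod_Icc_succ_top (by omega) c]; ring
  have hmono : ∀ j n m, j ≤ n → n ≤ m → range (Φ j m) ⊆ range (Φ j n) := by
    intro j n m hjn hnm
    induction m, hnm using Nat.le_induction with
    | base => exact subset_rfl
    | succ m hm ih =>
      rintro _ ⟨g, rfl⟩
      rw [hΦ₂ j m (hjn.trans hm) g]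
      exact ih ⟨_, rfl⟩
  have hdiam : ∀ j n, j ≤ n → ∀ x y : X j, x ∈ range (Φ j n) → y ∈ range (Φ j n) →
      d j x y ≤ (∏ i ∈ Finset.Icc j n, c i) * xd (n + 1) := by
    rintro j n hn x y ⟨u, rfl⟩ ⟨v, rfl⟩
    have hpnn : (0:ℝ) ≤ ∏ i ∈ Finset.Icc j n, c i :=
      Finset.prod_nonneg fun i _ => hc0 i
    exact (hΦbnd j n hn u v).trans
      (mul_le_mul_of_nonneg_left (hdle (n + 1) u v) hpnn)
  have key : ∀ (j : ℕ) (ε : ℝ), 0 < ε →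
      ∃ n, j ≤ n ∧ (∏ i ∈ Finset.Icc j n, c i) * xd (n + 1) < ε :=
    key_lemma_s12 xd c hxd0 hc0 hc1 β hβ hdiv
  have hK : ∀ j, ∃ p : X j, ∀ n, j ≤ n → p ∈ range (Φ j n) := by
    intro j
    set Z : ℕ → Set (X j) := fun k => range (Φ j (j + k)) with hZ
    have hZsub : ∀ k, Z (k + 1) ⊆ Z k := fun k =>
      hmono j (j + k) (j + (k + 1)) (Nat.le_add_right _ _) (by omega)
    have hZne : ∀ k, (Z k).Nonempty := fun k => range_nonempty _
    have hZcpt : ∀ k, IsCompact (Z k) := fun k =>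
      isCompact_range (hΦcont j (j + k) (Nat.le_add_right _ _))
    obtain ⟨p, hp⟩ := IsCompact.nonempty_iInter_of_sequence_nonempty_isCompact_isClosed
      Z hZsub hZne (hZcpt 0) (fun k => (hZcpt k).isClosed)
    refine ⟨p, fun n hn => ?_⟩
    have hmem := mem_iInter.mp hp (n - j)
    rw [hZ] at hmem
    simp only at hmem
    rwa [show j + (n - j) = n by omega] at hmem
  choose h hh using hK
  refine ⟨h, ?_, ?_⟩
  · intro j
    ext x
    simp only [mem_iInter, mem_setOf_eq, mem_singleton_iff]
    constructor
    · intro hx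
      have hd0 : d j x (h j) = 0 := by
        by_contra hne
        have hpos : 0 < d j x (h j) := (hd_nonneg j _ _).lt_of_ne (Ne.symm hne)
        obtain ⟨n, hn, hlt⟩ := key j (d j x (h j)) hpos
        exact absurd (hdiam j n hn x (h j) (hx n hn) (hh j n hn)) (not_le.mpr hlt)
      exact (hd_eq_zero j _ _).mp hd0
    · rintro rfl
      exact fun n hn => hh j n hn
  · intro g j
    rw [Metric.tendsto_atTop]
    intro ε hε
    obtain ⟨m, hm, hlt⟩ := key j ε hε
    refine ⟨m, fun n hn => ?_⟩
    have h1 : h j ∈ range (Φ j m) := hh j m hm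
    have h2 : Φ j (n + j) (g (n + j + 1)) ∈ range (Φ j m) :=
      hmono j m (n + j) hm (by omega) ⟨_, rfl⟩
    have h3 := hdiam j m hm _ _ h1 h2
    rw [Real.dist_0_eq_abs, abs_of_nonneg (hd_nonneg j _ _)]
    exact lt_of_le_of_lt h3 hlt
end

section
/- Fixed point principle in compact semi-metric spaces: if (X,d) is a compact semi-metric space and φ : X → X is a uniform contraction (d(φ(x),φ(y)) ≤ c·d(x,y) with c < 1), then φ has a unique fixed point h, and h = lim_{n→∞} φⁿ(g_n) for any sequence (g_n) in X. -/
open Filter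

/-- Fixed point principle in compact semi-metric spaces: a uniform contraction
φ of a compact semi-metric space (X, d) has a unique fixed point h, which is
obtained as h = lim_n φⁿ(g_n) for any sequence (g_n) in X. -/
theorem fixed_point_principle_semimetric
    (X : Type*) [TopologicalSpace X] [CompactSpace X] [T2Space X] [Nonempty X]
    (d : X → X → ℝ)
    (hd_cont : Continuous (fun p : X × X => d p.1 p.2))
    (hd_nonneg : ∀ x y : X, 0 ≤ d x y)
    (hd_symm : ∀ x y : X, d x y = d y x)
    (hd_eq_zero : ∀ x y : X, d x y = 0 ↔ x = y)
    (φ : X → X) (c : ℝ) (hc0 : 0 ≤ c) (hc1 : c < 1)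
    (hφ : ∀ x y : X, d (φ x) (φ y) ≤ c * d x y) :
    ∃ h : X, φ h = h ∧ (∀ h' : X, φ h' = h' → h' = h) ∧
      ∀ g : ℕ → X, Tendsto (fun n => d h (φ^[n] (g n))) atTop (nhds 0) := by
  -- d y · is continuous for each y
  have hdy_cont : ∀ y : X, Continuous (fun z => d y z) := fun y =>
    hd_cont.comp (continuous_const.prodMk continuous_id)
  -- Key: if d y · → 0 along a nontrivial filter, the filter converges to y
  have key : ∀ (F : Filter X) (y : X), F.NeBot →
      Tendsto (fun z => d y z) F (nhds 0) → F ≤ nhds y := by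
    intro F y hF h0
    apply le_nhds_of_unique_clusterPt
    intro x hx
    have hmc : ClusterPt (d y x) (Filter.map (fun z => d y z) F) :=
      hx.map (hdy_cont y).continuousAt Filter.tendsto_map
    have : d y x = 0 := by
      have hle : Filter.map (fun z => d y z) F ≤ nhds 0 := h0
      have hne : (nhds (d y x) ⊓ nhds (0 : ℝ)).NeBot := hmc.mono hle
      exact eq_of_nhds_neBot hne
    exact ((hd_eq_zero y x).mp this).symm
  -- φ is continuous
  have hφ_cont : Continuous φ := by
    rw [continuous_iff_continuousAt]
    intro x
    apply key (Filter.map φ (nhds x)) (φ x) (Filter.map_neBot)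
    rw [Filter.tendsto_map'_iff]
    have hdx : Tendsto (fun z => d x z) (nhds x) (nhds 0) := by
      have := (hdy_cont x).tendsto x
      rwa [(hd_eq_zero x x).mpr rfl] at this
    have h1 : Tendsto (fun z => c * d x z) (nhds x) (nhds 0) := by
      simpa using hdx.const_mul c
    exact squeeze_zero (fun z => hd_nonneg _ _) (fun z => hφ x z) h1
  -- fixed point via minimizing d x (φ x)
  have hf_cont : Continuous (fun x => d x (φ x)) :=
    hd_cont.comp (continuous_id.prodMk hφ_cont)
  obtain ⟨h, -, hmin⟩ := isCompact_univ.exists_isMinOn (Set.univ_nonempty)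
    hf_cont.continuousOn
  have hfix : φ h = h := by
    have hle : d (φ h) (φ (φ h)) ≤ c * d h (φ h) := hφ h (φ h)
    have hmin' : d h (φ h) ≤ d (φ h) (φ (φ h)) := hmin (Set.mem_univ (φ h))
    have h0 : d h (φ h) = 0 := by
      by_contra hne
      have hpos : 0 < d h (φ h) := lt_of_le_of_ne (hd_nonneg _ _) (Ne.symm hne)
      have : d h (φ h) < d h (φ h) := by
        calc d h (φ h) ≤ d (φ h) (φ (φ h)) := hmin'
          _ ≤ c * d h (φ h) := hle
          _ < 1 * d h (φ h) := by exact mul_lt_mul_of_pos_right hc1 hpos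
          _ = d h (φ h) := one_mul _
      exact lt_irrefl _ this
    exact ((hd_eq_zero h (φ h)).mp h0).symm
  refine ⟨h, hfix, ?_, ?_⟩
  · intro h' hh'
    have : d h h' ≤ c * d h h' := by
      calc d h h' = d (φ h) (φ h') := by rw [hfix, hh']
        _ ≤ c * d h h' := hφ h h'
    have h0 : d h h' = 0 := by
      nlinarith [hd_nonneg h h']
    exact ((hd_eq_zero h h').mp h0).symm
  · intro g
    -- bound: d h x ≤ M for all x
    obtain ⟨m, -, hM⟩ := isCompact_univ.exists_isMaxOn (Set.univ_nonempty)
      (hdy_cont h).continuousOn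
    set M := d h m with hMdef
    have hbound : ∀ x, d h x ≤ M := fun x => hM (Set.mem_univ x)
    have hiter : ∀ n x y, d (φ^[n] x) (φ^[n] y) ≤ c ^ n * d x y := by
      intro n
      induction n with
      | zero => intro x y; simp
      | succ n ih =>
        intro x y
        rw [Function.iterate_succ_apply', Function.iterate_succ_apply']
        calc d (φ (φ^[n] x)) (φ (φ^[n] y)) ≤ c * d (φ^[n] x) (φ^[n] y) := hφ _ _
          _ ≤ c * (c ^ n * d x y) := by
              exact mul_le_mul_of_nonneg_left (ih x y) hc0
          _ = c ^ (n + 1) * d x y := by ring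
    have hfixn : ∀ n, φ^[n] h = h := by
      intro n
      induction n with
      | zero => rfl
      | succ n ih => rw [Function.iterate_succ_apply', ih, hfix]
    have hub : ∀ n, d h (φ^[n] (g n)) ≤ c ^ n * M := by
      intro n
      calc d h (φ^[n] (g n)) = d (φ^[n] h) (φ^[n] (g n)) := by rw [hfixn n]
        _ ≤ c ^ n * d h (g n) := hiter n h (g n)
        _ ≤ c ^ n * M := mul_le_mul_of_nonneg_left (hbound _) (pow_nonneg hc0 n)
    have hcn : Tendsto (fun n => c ^ n * M) atTop (nhds 0) := by
      have : Tendsto (fun n => c ^ n) atTop (nhds (0:ℝ)) :=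
        tendsto_pow_atTop_nhds_zero_of_lt_one hc0 hc1
      simpa using this.mul_const M
    exact squeeze_zero (fun n => hd_nonneg _ _) hub hcn
end

section
/- Geometry of hyperbolic γ-balls (one-dimensional): for ζ ∈ ℍ and r ≥ 0, with B_r(ζ) = {ξ ∈ ℍ : γ(ξ,ζ) ≤ r}, the quantities ε₁(r) = inf{|ξ-ζ| : ξ ∉ B_r(ζ)} and ε₂(r) = min{Im ξ : ξ ∈ B_r(ζ)} satisfy ε₁(r) + ε₂(r) = Im ζ and ε₁(r)² = r · (Im ζ) · ε₂(r) for r > 0. -/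
lemma gam_aux_abs (ζ : ℂ) (t : ℝ) :
    ‖((ζ.re : ℂ) + (t : ℂ) * Complex.I) - ζ‖ = |t - ζ.im| := by
  have h : ((ζ.re : ℂ) + (t : ℂ) * Complex.I) - ζ = ((t - ζ.im : ℝ) : ℂ) * Complex.I := by
    apply Complex.ext <;> simp
  rw [h, norm_mul, Complex.norm_real, Real.norm_eq_abs, Complex.norm_I, mul_one]

lemma gam_aux_im (ζ : ℂ) (t : ℝ) : ((ζ.re : ℂ) + (t : ℂ) * Complex.I).im = t := by simp

set_option maxHeartbeats 1000000 in
/-- Geometry of γ-balls: for ζ ∈ ℍ and r > 0, the minimal euclidean distance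
ε₁(r) from the center to the complement of the γ-ball of radius r and the
minimal imaginary part ε₂(r) on the ball satisfy ε₁ + ε₂ = Im ζ and
ε₁² = r · Im ζ · ε₂. -/
theorem gam_ball_geometry (ζ : ℂ) (hζ : 0 < ζ.im) (r : ℝ) (hr : 0 < r) :
    sInf ((fun ξ : ℂ => ‖ξ - ζ‖) ''
        {ξ : ℂ | 0 < ξ.im ∧ ¬ gamSM ξ ζ ≤ r}) +
      sInf ((fun ξ : ℂ => ξ.im) '' {ξ : ℂ | 0 < ξ.im ∧ gamSM ξ ζ ≤ r}) = ζ.im ∧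
    (sInf ((fun ξ : ℂ => ‖ξ - ζ‖) ''
        {ξ : ℂ | 0 < ξ.im ∧ ¬ gamSM ξ ζ ≤ r})) ^ 2 =
      r * ζ.im * sInf ((fun ξ : ℂ => ξ.im) '' {ξ : ℂ | 0 < ξ.im ∧ gamSM ξ ζ ≤ r}) := by
  set y := ζ.im with hy
  set s := Real.sqrt (r + r ^ 2 / 4) with hsdef
  have hs2 : s ^ 2 = r + r ^ 2 / 4 := Real.sq_sqrt (by positivity)
  have hs0 : 0 ≤ s := Real.sqrt_nonneg _
  have hsr : r / 2 < s := by nlinarith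
  have hs1 : s < 1 + r / 2 := by nlinarith
  set E1 := y * (s - r / 2) with hE1def
  set E2 := y * (1 + r / 2 - s) with hE2def
  have hE1 : 0 < E1 := mul_pos hζ (by linarith)
  have hE2 : 0 < E2 := mul_pos hζ (by linarith)
  have hyE : y - E1 = E2 := by rw [hE1def, hE2def]; ring
  have hE1E2 : E1 ^ 2 = r * y * E2 := by
    rw [hE1def, hE2def]; linear_combination y ^ 2 * hs2
  -- the boundary point ζ.re + E2 * I
  have hmemE2 : ((ζ.re : ℂ) + (E2 : ℂ) * Complex.I) ∈ {ξ : ℂ | 0 < ξ.im ∧ gamSM ξ ζ ≤ r} := by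
    refine ⟨by rw [gam_aux_im]; exact hE2, ?_⟩
    rw [gamSM, gam_aux_abs, gam_aux_im, ← hy]
    have habs : |E2 - y| = E1 := by
      rw [abs_of_nonpos (by nlinarith [mul_pos hζ (sub_pos.mpr hsr)])]
      rw [hE1def, hE2def]; ring
    rw [habs, div_le_iff₀ (by positivity)]
    nlinarith [hE1E2]
  have hbdd1 : BddBelow ((fun ξ : ℂ => ‖ξ - ζ‖) ''
      {ξ : ℂ | 0 < ξ.im ∧ ¬ gamSM ξ ζ ≤ r}) := by
    refine ⟨0, ?_⟩
    rintro b ⟨ξ, -, rfl⟩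
    exact norm_nonneg _
  have hbdd2 : BddBelow ((fun ξ : ℂ => ξ.im) ''
      {ξ : ℂ | 0 < ξ.im ∧ gamSM ξ ζ ≤ r}) := by
    refine ⟨0, ?_⟩
    rintro b ⟨ξ, hξ, rfl⟩
    exact hξ.1.le
  -- outside points just below
  have houtside : ∀ t : ℝ, 0 < t → t < E2 →
      ((ζ.re : ℂ) + ((y - E1 - t : ℝ) : ℂ) * Complex.I) ∈
        {ξ : ℂ | 0 < ξ.im ∧ ¬ gamSM ξ ζ ≤ r} := by
    intro t ht htE2
    constructor
    · rw [gam_aux_im]; linarith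
    · rw [gamSM, gam_aux_abs, gam_aux_im, ← hy]
      have habs : |y - E1 - t - y| = E1 + t := by
        rw [abs_of_nonpos (by linarith)]; ring
      rw [habs, not_le, lt_div_iff₀ (by nlinarith)]
      have hq : r * y * E2 = r * y ^ 2 - r * y * E1 := by rw [← hyE]; ring
      nlinarith [hE1E2, hq, mul_pos hr (mul_pos hζ ht), mul_pos hE1 ht, sq_nonneg t]
  have habs_out : ∀ t : ℝ,
      ‖((ζ.re : ℂ) + ((y - E1 - t : ℝ) : ℂ) * Complex.I) - ζ‖ = E1 + t ∨ True := by
    intro t; right; trivial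
  have hne1 : ((fun ξ : ℂ => ‖ξ - ζ‖) ''
      {ξ : ℂ | 0 < ξ.im ∧ ¬ gamSM ξ ζ ≤ r}).Nonempty :=
    ⟨_, ⟨_, houtside (E2 / 2) (by linarith) (by linarith), rfl⟩⟩
  -- key computation 1
  have key1 : sInf ((fun ξ : ℂ => ‖ξ - ζ‖) ''
      {ξ : ℂ | 0 < ξ.im ∧ ¬ gamSM ξ ζ ≤ r}) = E1 := by
    apply le_antisymm
    · apply le_of_forall_pos_le_add
      intro ε hε
      set t := min ε E2 / 2 with htdef
      have ht : 0 < t := by positivity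
      have htE2 : t < E2 := by
        have := min_le_right ε E2; rw [htdef]; linarith
      have htε : t ≤ ε := by
        have := min_le_left ε E2; rw [htdef]; linarith
      have hval : ‖((ζ.re : ℂ) + ((y - E1 - t : ℝ) : ℂ) * Complex.I) - ζ‖
          = E1 + t := by
        rw [gam_aux_abs, ← hy, abs_of_nonpos (by linarith)]; ring
      calc sInf _ ≤ ‖((ζ.re : ℂ) + ((y - E1 - t : ℝ) : ℂ) * Complex.I) - ζ‖ :=
            csInf_le hbdd1 ⟨_, houtside t ht htE2, rfl⟩
        _ = E1 + t := hval
        _ ≤ E1 + ε := by linarith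
    · apply le_csInf hne1
      rintro b ⟨ξ, ⟨him, hout⟩, rfl⟩
      simp only
      rw [gamSM, not_le, lt_div_iff₀ (by positivity)] at hout
      have himle : |ξ.im - y| ≤ ‖ξ - ζ‖ := by
        have := Complex.abs_im_le_norm (ξ - ζ)
        rwa [Complex.sub_im] at this
      have habs0 : 0 ≤ ‖ξ - ζ‖ := norm_nonneg _
      set d := ‖ξ - ζ‖ with hd
      by_contra hcon
      push_neg at hcon
      have h1 : y - d ≤ ξ.im := by
        rcases abs_le.mp himle with ⟨h1, h2⟩; linarith
      have h2 : r * ((y - d) * y) ≤ r * (ξ.im * y) := by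
        apply mul_le_mul_of_nonneg_left _ hr.le
        exact mul_le_mul_of_nonneg_right h1 hζ.le
      have hprod : 0 < (E1 - d) * (d + E1 + r * y) :=
        mul_pos (sub_pos.mpr hcon) (by positivity)
      rw [← hy] at hout
      nlinarith [hprod, hE1E2, hyE, h2, hout]
  -- key computation 2
  have key2 : sInf ((fun ξ : ℂ => ξ.im) '' {ξ : ℂ | 0 < ξ.im ∧ gamSM ξ ζ ≤ r}) = E2 := by
    apply le_antisymm
    · calc sInf ((fun ξ : ℂ => ξ.im) '' {ξ : ℂ | 0 < ξ.im ∧ gamSM ξ ζ ≤ r})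
          ≤ ((ζ.re : ℂ) + (E2 : ℂ) * Complex.I).im := csInf_le hbdd2 ⟨_, hmemE2, rfl⟩
        _ = E2 := gam_aux_im ζ E2
    · refine le_csInf ⟨_, Set.mem_image_of_mem _ hmemE2⟩ ?_
      rintro b ⟨ξ, ⟨him, hin⟩, rfl⟩
      simp only
      rw [gamSM, div_le_iff₀ (by positivity)] at hin
      have himle : |ξ.im - y| ≤ ‖ξ - ζ‖ := by
        have := Complex.abs_im_le_norm (ξ - ζ)
        rwa [Complex.sub_im] at this
      have habs0 : 0 ≤ ‖ξ - ζ‖ := norm_nonneg _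
      have hsq : (ξ.im - y) ^ 2 ≤ r * (ξ.im * y) := by
        calc (ξ.im - y) ^ 2 = |ξ.im - y| ^ 2 := (sq_abs _).symm
          _ ≤ ‖ξ - ζ‖ ^ 2 := pow_le_pow_left₀ (abs_nonneg _) himle 2
          _ ≤ r * (ξ.im * ζ.im) := hin
          _ = r * (ξ.im * y) := by rw [← hy]
      by_contra hcon
      push_neg at hcon
      have hM : ξ.im < y * (1 + r / 2 + s) := by
        have : E2 ≤ y * (1 + r / 2 + s) := by
          rw [hE2def]
          apply mul_le_mul_of_nonneg_left _ hζ.le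
          linarith
        linarith
      have hprod : 0 < (E2 - ξ.im) * (y * (1 + r / 2 + s) - ξ.im) :=
        mul_pos (sub_pos.mpr hcon) (sub_pos.mpr hM)
      rw [hE2def] at hprod
      have hexp : (y * (1 + r / 2 - s) - ξ.im) * (y * (1 + r / 2 + s) - ξ.im) =
          y ^ 2 - (2 + r) * y * ξ.im + ξ.im ^ 2 := by
        linear_combination (-(y ^ 2)) * hs2
      rw [hexp] at hprod
      nlinarith [hprod, hsq]
  rw [key1, key2]
  constructor
  · rw [hE1def, hE2def]; ring
  · exact hE1E2
end

section
/- Refined Jensen inequality for powers: for p ≥ 1, λ ∈ [0,1], and reals a ≥ b ≥ 0, (λa + (1-λ)b)^p ≤ (1 - δ_p)·(λa^p + (1-λ)b^p), where δ_p = (1 - b/a)² · (p(p-1)λ(1-λ)/2) if 1 ≤ p < 2, and δ_p = (1 - b/a)² · λ(1 - λ^{p-1}) if p ≥ 2 (with δ_p = 0 when a = 0). -/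
section RJAux
open Set

lemma concave_aux {g g' g'' : ℝ → ℝ}
    (h1 : ∀ x ∈ Ioo (0:ℝ) 1, HasDerivAt g (g' x) x)
    (h2 : ∀ x ∈ Ioo (0:ℝ) 1, HasDerivAt g' (g'' x) x)
    (hc : ContinuousOn g (Icc 0 1))
    (hneg : ∀ x ∈ Ioo (0:ℝ) 1, g'' x ≤ 0) :
    ConcaveOn ℝ (Icc (0:ℝ) 1) g := by
  have hint : interior (Icc (0:ℝ) 1) = Ioo 0 1 := interior_Icc
  have hderiv : ∀ x ∈ Ioo (0:ℝ) 1, deriv g x = g' x := fun x hx => (h1 x hx).deriv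
  have hev : ∀ x ∈ Ioo (0:ℝ) 1, deriv g =ᶠ[nhds x] g' := by
    intro x hx
    filter_upwards [isOpen_Ioo.mem_nhds hx] with y hy using hderiv y hy
  apply concaveOn_of_deriv2_nonpos (convex_Icc 0 1) hc
  · rw [hint]; exact fun x hx => ((h1 x hx).differentiableAt).differentiableWithinAt
  · rw [hint]
    intro x hx
    exact (((h2 x hx).congr_of_eventuallyEq (hev x hx)).differentiableAt).differentiableWithinAt
  · rw [hint]
    intro x hx
    have h3 : deriv (deriv g) x = deriv g' x := (hev x hx).deriv_eq
    have h4 : deriv^[2] g x = deriv (deriv g) x := rfl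
    rw [h4, h3, (h2 x hx).deriv]
    exact hneg x hx

lemma keyA (p t l : ℝ) (hp : 1 ≤ p) (hp2 : p ≤ 2) (ht0 : 0 ≤ t) (ht1 : t ≤ 1)
    (hl0 : 0 ≤ l) (hl1 : l ≤ 1) :
    (l + (1 - l) * t) ^ p + p * (p - 1) * l * (1 - l) / 2 * (1 - t) ^ 2
      ≤ l + (1 - l) * t ^ p := by
  set c : ℝ := p * (p - 1) / 2 * (1 - t) ^ 2 with hc
  set g : ℝ → ℝ := fun l => l + (1 - l) * t ^ p - (l + (1 - l) * t) ^ p - c * (l * (1 - l))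
    with hg
  set g' : ℝ → ℝ := fun l =>
    1 - t ^ p - (1 - t) * p * (l + (1 - l) * t) ^ (p - 1) - c * (1 - 2 * l) with hg'
  set g'' : ℝ → ℝ := fun l =>
    -((1 - t) ^ 2 * p * (p - 1) * (l + (1 - l) * t) ^ (p - 2)) + 2 * c with hg''
  clear_value c g g' g''
  have hxlin : ∀ x : ℝ, HasDerivAt (fun l : ℝ => l + (1 - l) * t) (1 - t) x := by
    intro x
    have : HasDerivAt (fun l : ℝ => l + (1 - l) * t) (1 + (0 - 1) * t) x :=
      (hasDerivAt_id x).add (((hasDerivAt_const x 1).sub (hasDerivAt_id x)).mul_const t)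
    convert this using 1; ring
  have hxpos : ∀ x ∈ Ioo (0:ℝ) 1, 0 < x + (1 - x) * t := by
    intro x hx
    have := hx.1
    nlinarith [hx.2]
  have hD1 : ∀ x ∈ Ioo (0:ℝ) 1, HasDerivAt g (g' x) x := by
    intro x hx
    have h1 : HasDerivAt (fun l : ℝ => l + (1 - l) * t ^ p) (1 + (0 - 1) * t ^ p) x :=
      (hasDerivAt_id x).add (((hasDerivAt_const x 1).sub (hasDerivAt_id x)).mul_const (t ^ p))
    have h2 : HasDerivAt (fun l : ℝ => (l + (1 - l) * t) ^ p)
        ((1 - t) * p * (x + (1 - x) * t) ^ (p - 1)) x :=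
      (hxlin x).rpow_const (Or.inr hp)
    have h3 : HasDerivAt (fun l : ℝ => c * (l * (1 - l)))
        (c * (1 * (1 - x) + x * (0 - 1))) x :=
      ((hasDerivAt_id x).mul ((hasDerivAt_const x 1).sub (hasDerivAt_id x))).const_mul c
    refine (by rw [hg]; exact (h1.sub h2).sub h3 : HasDerivAt g _ x).congr_deriv ?_
    simp only [hg']; ring
  have hD2 : ∀ x ∈ Ioo (0:ℝ) 1, HasDerivAt g' (g'' x) x := by
    intro x hx
    have h2 : HasDerivAt (fun l : ℝ => (l + (1 - l) * t) ^ (p - 1))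
        ((1 - t) * (p - 1) * (x + (1 - x) * t) ^ (p - 1 - 1)) x :=
      (hxlin x).rpow_const (Or.inl (ne_of_gt (hxpos x hx)))
    have h2' := h2.const_mul ((1 - t) * p)
    have h3 : HasDerivAt (fun l : ℝ => c * (1 - 2 * l)) (c * (0 - 2 * 1)) x :=
      ((hasDerivAt_const x 1).sub ((hasDerivAt_id x).const_mul 2)).const_mul c
    have h1 : HasDerivAt (fun l : ℝ => 1 - t ^ p) 0 x := hasDerivAt_const x _
    refine (by rw [hg']; exact (h1.sub h2').sub h3 : HasDerivAt g' _ x).congr_deriv ?_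
    have he : p - 1 - 1 = p - 2 := by ring
    simp only [hg'', he]; ring
  have hcont : ContinuousOn g (Icc 0 1) := by
    rw [hg]
    apply Continuous.continuousOn
    apply Continuous.sub
    apply Continuous.sub
    · continuity
    · exact Continuous.rpow_const (by continuity) (fun x => Or.inr (by linarith))
    · continuity
  have hneg : ∀ x ∈ Ioo (0:ℝ) 1, g'' x ≤ 0 := by
    intro x hx
    obtain ⟨hx1, hx2⟩ := hx
    have hxp := hxpos x ⟨hx1, hx2⟩
    have hxle : x + (1 - x) * t ≤ 1 := by
      have h1 : (1 - x) * t ≤ (1 - x) * 1 := by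
        apply mul_le_mul_of_nonneg_left ht1; linarith
      linarith
    have hone : (1:ℝ) ≤ (x + (1 - x) * t) ^ (p - 2) :=
      Real.one_le_rpow_of_pos_of_le_one_of_nonpos hxp hxle (by linarith)
    have hpp : 0 ≤ p * (p - 1) := by nlinarith
    have h1t : (0:ℝ) ≤ (1 - t) ^ 2 := sq_nonneg _
    simp only [hg'']
    have : (1 - t) ^ 2 * p * (p - 1) * 1 ≤ (1 - t) ^ 2 * p * (p - 1) * (x + (1 - x) * t) ^ (p - 2) := by
      apply mul_le_mul_of_nonneg_left hone
      exact mul_nonneg (mul_nonneg h1t (by linarith)) (by linarith)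
    rw [hc]
    linarith [this]
  have hconc := concave_aux hD1 hD2 hcont hneg
  have h01 : (1:ℝ) ∈ Icc (0:ℝ) 1 := by constructor <;> norm_num
  have h00 : (0:ℝ) ∈ Icc (0:ℝ) 1 := by constructor <;> norm_num
  have key := hconc.2 h01 h00 hl0 (by linarith : (0:ℝ) ≤ 1 - l) (by ring)
  have hg1 : g 1 = 0 := by simp [hg, Real.one_rpow]
  have hg0 : g 0 = 0 := by simp [hg]
  rw [hg1, hg0] at key
  simp only [smul_eq_mul, mul_zero, mul_one, add_zero] at key
  have key2 : 0 ≤ g l := by convert key using 2 <;> ring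
  simp only [hg, hc] at key2
  linarith [key2]

lemma keyB (p t l : ℝ) (hp2 : 2 ≤ p) (ht0 : 0 ≤ t) (ht1 : t ≤ 1)
    (hl0 : 0 ≤ l) (hl1 : l ≤ 1) :
    (l + (1 - l) * t) ^ p + (l - l ^ p) * (1 - t) ^ 2
      ≤ l + (1 - l) * t ^ p := by
  have hp : (1:ℝ) ≤ p := by linarith
  set g : ℝ → ℝ := fun l =>
    l + (1 - l) * t ^ p - (l + (1 - l) * t) ^ p - (l - l ^ p) * (1 - t) ^ 2 with hg
  set g' : ℝ → ℝ := fun l =>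
    1 - t ^ p - (1 - t) * p * (l + (1 - l) * t) ^ (p - 1)
      - (1 - p * l ^ (p - 1)) * (1 - t) ^ 2 with hg'
  set g'' : ℝ → ℝ := fun l =>
    -((1 - t) ^ 2 * p * (p - 1) * (l + (1 - l) * t) ^ (p - 2))
      + p * (p - 1) * l ^ (p - 2) * (1 - t) ^ 2 with hg''
  clear_value g g' g''
  have hxlin : ∀ x : ℝ, HasDerivAt (fun l : ℝ => l + (1 - l) * t) (1 - t) x := by
    intro x
    have : HasDerivAt (fun l : ℝ => l + (1 - l) * t) (1 + (0 - 1) * t) x :=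
      (hasDerivAt_id x).add (((hasDerivAt_const x 1).sub (hasDerivAt_id x)).mul_const t)
    convert this using 1; ring
  have hxpos : ∀ x ∈ Ioo (0:ℝ) 1, 0 < x + (1 - x) * t := by
    intro x hx
    have := hx.1
    nlinarith [hx.2]
  have hD1 : ∀ x ∈ Ioo (0:ℝ) 1, HasDerivAt g (g' x) x := by
    intro x hx
    have h1 : HasDerivAt (fun l : ℝ => l + (1 - l) * t ^ p) (1 + (0 - 1) * t ^ p) x :=
      (hasDerivAt_id x).add (((hasDerivAt_const x 1).sub (hasDerivAt_id x)).mul_const (t ^ p))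
    have h2 : HasDerivAt (fun l : ℝ => (l + (1 - l) * t) ^ p)
        ((1 - t) * p * (x + (1 - x) * t) ^ (p - 1)) x :=
      (hxlin x).rpow_const (Or.inr hp)
    have h3 : HasDerivAt (fun l : ℝ => (l - l ^ p) * (1 - t) ^ 2)
        ((1 - p * x ^ (p - 1)) * (1 - t) ^ 2) x :=
      ((hasDerivAt_id x).sub (Real.hasDerivAt_rpow_const (Or.inr hp))).mul_const ((1 - t) ^ 2)
    refine (by rw [hg]; exact (h1.sub h2).sub h3 : HasDerivAt g _ x).congr_deriv ?_
    simp only [hg']; ring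
  have hD2 : ∀ x ∈ Ioo (0:ℝ) 1, HasDerivAt g' (g'' x) x := by
    intro x hx
    have h2 : HasDerivAt (fun l : ℝ => (l + (1 - l) * t) ^ (p - 1))
        ((1 - t) * (p - 1) * (x + (1 - x) * t) ^ (p - 1 - 1)) x :=
      (hxlin x).rpow_const (Or.inl (ne_of_gt (hxpos x hx)))
    have h2' := h2.const_mul ((1 - t) * p)
    have h3 : HasDerivAt (fun l : ℝ => (1 - p * l ^ (p - 1)) * (1 - t) ^ 2)
        ((0 - p * ((p - 1) * x ^ (p - 1 - 1))) * (1 - t) ^ 2) x :=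
      (((hasDerivAt_const x 1).sub
        ((Real.hasDerivAt_rpow_const (Or.inl (ne_of_gt hx.1))).const_mul p))).mul_const
        ((1 - t) ^ 2)
    have h1 : HasDerivAt (fun l : ℝ => 1 - t ^ p) 0 x := hasDerivAt_const x _
    refine (by rw [hg']; exact (h1.sub h2').sub h3 : HasDerivAt g' _ x).congr_deriv ?_
    have he : p - 1 - 1 = p - 2 := by ring
    simp only [hg'', he]; ring
  have hcont : ContinuousOn g (Icc 0 1) := by
    rw [hg]
    apply Continuous.continuousOn
    apply Continuous.sub
    apply Continuous.sub
    · continuity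
    · exact Continuous.rpow_const (by continuity) (fun x => Or.inr (by linarith))
    · apply Continuous.mul _ continuous_const
      exact continuous_id.sub (Continuous.rpow_const continuous_id
        (fun x => Or.inr (by linarith)))
  have hneg : ∀ x ∈ Ioo (0:ℝ) 1, g'' x ≤ 0 := by
    intro x hx
    obtain ⟨hx1, hx2⟩ := hx
    have hxp := hxpos x ⟨hx1, hx2⟩
    have hxle : x ≤ x + (1 - x) * t := by nlinarith
    have hmono : x ^ (p - 2) ≤ (x + (1 - x) * t) ^ (p - 2) :=
      Real.rpow_le_rpow (le_of_lt hx1) hxle (by linarith)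
    have hpp : 0 ≤ p * (p - 1) := by nlinarith
    have h1t : (0:ℝ) ≤ (1 - t) ^ 2 := sq_nonneg _
    simp only [hg'']
    have h5 : p * (p - 1) * x ^ (p - 2) * (1 - t) ^ 2
        ≤ p * (p - 1) * (x + (1 - x) * t) ^ (p - 2) * (1 - t) ^ 2 := by
      apply mul_le_mul_of_nonneg_right _ h1t
      exact mul_le_mul_of_nonneg_left hmono hpp
    linarith [h5]
  have hconc := concave_aux hD1 hD2 hcont hneg
  have h01 : (1:ℝ) ∈ Icc (0:ℝ) 1 := by constructor <;> norm_num
  have h00 : (0:ℝ) ∈ Icc (0:ℝ) 1 := by constructor <;> norm_num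
  have key := hconc.2 h01 h00 hl0 (by linarith : (0:ℝ) ≤ 1 - l) (by ring)
  have hg1 : g 1 = 0 := by simp [hg, Real.one_rpow]
  have hg0 : g 0 = 0 := by
    simp [hg, Real.zero_rpow (by linarith : p ≠ 0)]
  rw [hg1, hg0] at key
  simp only [smul_eq_mul, mul_zero, mul_one, add_zero] at key
  have key2 : 0 ≤ g l := by convert key using 2
  simp only [hg] at key2
  linarith [key2]
end RJAux


/-- Refined Jensen inequality for powers: for p ≥ 1, λ ∈ [0,1] and a ≥ b ≥ 0,
(λa + (1-λ)b)^p ≤ (1-δ_p)(λa^p + (1-λ)b^p), with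
δ_p = (1-b/a)²·p(p-1)λ(1-λ)/2 for 1 ≤ p < 2 and
δ_p = (1-b/a)²·λ(1-λ^{p-1}) for p ≥ 2 (and δ_p = 0 when a = 0). -/
theorem refined_jensen_powers (p l a b : ℝ)
    (hp : 1 ≤ p) (hl0 : 0 ≤ l) (hl1 : l ≤ 1) (hb : 0 ≤ b) (hab : b ≤ a) :
    (l * a + (1 - l) * b) ^ p ≤
      (1 - (if a = 0 then 0 else
        (1 - b / a) ^ 2 *
          (if p < 2 then p * (p - 1) * l * (1 - l) / 2
           else l * (1 - l ^ (p - 1))))) *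
        (l * a ^ p + (1 - l) * b ^ p) := by
  have hp0 : (0:ℝ) < p := by linarith
  by_cases ha : a = 0
  · have hb0 : b = 0 := le_antisymm (ha ▸ hab) hb
    rw [if_pos ha]
    simp [ha, hb0, Real.zero_rpow hp0.ne']
  · rw [if_neg ha]
    have ha0 : 0 < a := lt_of_le_of_ne (le_trans hb hab) (Ne.symm ha)
    set t : ℝ := b / a with hT
    have ht0 : 0 ≤ t := div_nonneg hb ha0.le
    have ht1 : t ≤ 1 := (div_le_one ha0).2 hab
    have hbt : b = a * t := by rw [hT]; field_simp
    set C : ℝ := if p < 2 then p * (p - 1) * l * (1 - l) / 2 else l * (1 - l ^ (p - 1))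
      with hC
    have hC0 : 0 ≤ C := by
      rw [hC]
      split
      · have h1 : 0 ≤ p * (p - 1) * l * (1 - l) :=
          mul_nonneg (mul_nonneg (mul_nonneg hp0.le (by linarith)) hl0) (by linarith)
        linarith
      · have h2 : l ^ (p - 1) ≤ 1 := Real.rpow_le_one hl0 hl1 (by linarith)
        exact mul_nonneg hl0 (by linarith)
    -- core scalar inequality
    have hcore : (l + (1 - l) * t) ^ p + C * (1 - t) ^ 2 ≤ l + (1 - l) * t ^ p := by
      rw [hC]
      split
      · next h => exact keyA p t l hp (le_of_lt h) ht0 ht1 hl0 hl1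
      · next h =>
        have hp2 : 2 ≤ p := not_lt.1 h
        have hlp : l * (1 - l ^ (p - 1)) = l - l ^ p := by
          rcases eq_or_lt_of_le hl0 with h0 | h0
          · simp [← h0, Real.zero_rpow hp0.ne']
          · have : l ^ p = l * l ^ (p - 1) := by
              rw [show p = 1 + (p - 1) by ring, Real.rpow_add h0, Real.rpow_one]
              ring_nf
            rw [this]; ring
        rw [hlp]
        exact keyB p t l hp2 ht0 ht1 hl0 hl1
    have htp0 : 0 ≤ t ^ p := Real.rpow_nonneg ht0 p
    have htp1 : t ^ p ≤ 1 := Real.rpow_le_one ht0 ht1 hp0.le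
    have hm1 : l + (1 - l) * t ^ p ≤ 1 := by nlinarith
    have hm0 : 0 ≤ l + (1 - l) * t ^ p := by nlinarith
    have hscalar : (l + (1 - l) * t) ^ p
        ≤ (1 - (1 - t) ^ 2 * C) * (l + (1 - l) * t ^ p) := by
      have h1 : C * (1 - t) ^ 2 * (l + (1 - l) * t ^ p) ≤ C * (1 - t) ^ 2 * 1 :=
        mul_le_mul_of_nonneg_left hm1 (by positivity)
      nlinarith [hcore, h1]
    -- scaling
    have hxn : 0 ≤ l + (1 - l) * t := by nlinarith
    have hL : l * a + (1 - l) * b = a * (l + (1 - l) * t) := by rw [hbt]; ring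
    have hLp : (l * a + (1 - l) * b) ^ p = a ^ p * (l + (1 - l) * t) ^ p := by
      rw [hL, Real.mul_rpow ha0.le hxn]
    have hbp : b ^ p = a ^ p * t ^ p := by rw [hbt, Real.mul_rpow ha0.le ht0]
    have hap : 0 ≤ a ^ p := Real.rpow_nonneg ha0.le p
    calc (l * a + (1 - l) * b) ^ p = a ^ p * (l + (1 - l) * t) ^ p := hLp
      _ ≤ a ^ p * ((1 - (1 - t) ^ 2 * C) * (l + (1 - l) * t ^ p)) :=
          mul_le_mul_of_nonneg_left hscalar hap
      _ = (1 - (1 - t) ^ 2 * C) * (l * a ^ p + (1 - l) * b ^ p) := by rw [hbp]; ring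
end

section
/- Argument perturbation lemma: let ξ, ζ ∈ ℂ with ξ ≠ 0, arg ξ ∈ [-π/2, π/2], and |ζ| < 1. Then |arg(1 + ξ + ζ)| ≤ |arg ξ| + |ζ|/(1 - |ζ|), where |arg·| denotes the distance of the argument to 0 in ℝ/2πℤ. In particular, for ξ = 0: |arg(1 + ζ)| ≤ |ζ|/(1 - |ζ|). -/
open Real Complex

private lemma arctan_le_self' {x : ℝ} (hx : 0 ≤ x) : Real.arctan x ≤ x := by
  rcases hx.eq_or_lt with h | h
  · simp [← h]
  · have h1 : 0 < Real.arctan x := by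
      have := Real.arctan_strictMono h
      simpa using this
    have := Real.lt_tan h1 (Real.arctan_lt_pi_div_two x)
    rw [Real.tan_arctan] at this
    linarith

private lemma abs_arctan' (t : ℝ) : |Real.arctan t| = Real.arctan |t| := by
  rcases le_or_gt 0 t with h | h
  · rw [_root_.abs_of_nonneg h, _root_.abs_of_nonneg]
    rw [← Real.arctan_zero]
    exact Real.arctan_strictMono.monotone h
  · rw [abs_of_neg h, Real.arctan_neg]
    apply abs_of_nonpos
    have := Real.arctan_strictMono.monotone h.le
    simpa using this

private lemma abs_arcsin' (t : ℝ) : |Real.arcsin t| = Real.arcsin |t| := by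
  rcases le_or_gt 0 t with h | h
  · rw [_root_.abs_of_nonneg h, _root_.abs_of_nonneg (Real.arcsin_nonneg.mpr h)]
  · rw [abs_of_neg h, Real.arcsin_neg]
    apply abs_of_nonpos
    have := Real.monotone_arcsin h.le
    simpa using this

private lemma arg_eq_arctan' {z : ℂ} (hz : 0 < z.re) : z.arg = Real.arctan (z.im / z.re) := by
  have hz0 : z ≠ 0 := by
    intro h; rw [h] at hz; simp at hz
  have habs : ‖z‖ ≠ 0 := norm_ne_zero_iff.mpr hz0
  symm
  apply Real.arctan_eq_of_tan_eq
  · rw [Real.tan_eq_sin_div_cos, Complex.sin_arg, Complex.cos_arg hz0]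
    field_simp
  · rw [Set.mem_Ioo, ← abs_lt, Complex.abs_arg_lt_pi_div_two_iff]
    exact Or.inl hz

private lemma key_bound {η : ℂ} (hη : ‖η‖ < 1) :
    |Complex.arg (1 + η)| ≤ ‖η‖ / (1 - ‖η‖) := by
  have hre' : |η.re| ≤ ‖η‖ := Complex.abs_re_le_norm η
  have him : |η.im| ≤ ‖η‖ := Complex.abs_im_le_norm η
  obtain ⟨hr1, hr2⟩ := abs_le.mp hre'
  have hre : (0:ℝ) < (1 + η).re := by
    simp only [Complex.add_re, Complex.one_re]; linarith
  have hre2 : 1 - ‖η‖ ≤ (1 + η).re := by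
    simp only [Complex.add_re, Complex.one_re]; linarith
  rw [arg_eq_arctan' hre, abs_arctan']
  refine (arctan_le_self' (abs_nonneg _)).trans ?_
  rw [abs_div, abs_of_pos hre]
  have him2 : |(1 + η).im| ≤ ‖η‖ := by simpa using him
  have hpos : (0:ℝ) < 1 - ‖η‖ := by linarith
  exact div_le_div₀ (norm_nonneg η) him2 hpos hre2

private lemma frac_mono' {a b : ℝ} (ha : 0 ≤ a) (hab : a ≤ b) (hb : b < 1) :
    a / (1 - a) ≤ b / (1 - b) := by
  have h1 : (0:ℝ) < 1 - a := by linarith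
  have h2 : (0:ℝ) < 1 - b := by linarith
  rw [div_le_div_iff₀ h1 h2]
  nlinarith

/-- Argument perturbation lemma: for ξ ≠ 0 with arg ξ ∈ [-π/2,π/2] and |ζ| < 1,
|arg(1+ξ+ζ)| ≤ |arg ξ| + |ζ|/(1-|ζ|); moreover |arg(1+ζ)| ≤ |ζ|/(1-|ζ|). -/
theorem arg_perturbation (ξ ζ : ℂ) (hξ : ξ ≠ 0)
    (harg : |Complex.arg ξ| ≤ Real.pi / 2) (hζ : ‖ζ‖ < 1) :
    |Complex.arg (1 + ξ + ζ)| ≤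
      |Complex.arg ξ| + ‖ζ‖ / (1 - ‖ζ‖) ∧
    |Complex.arg (1 + ζ)| ≤ ‖ζ‖ / (1 - ‖ζ‖) := by
  refine ⟨?_, key_bound hζ⟩
  have hreξ : 0 ≤ ξ.re := Complex.abs_arg_le_pi_div_two_iff.mp harg
  set w := 1 + ξ with hw
  have hrew : (1:ℝ) ≤ w.re := by simp [hw]; linarith
  have hrew0 : 0 < w.re := lt_of_lt_of_le one_pos hrew
  have hw0 : w ≠ 0 := by
    intro h; rw [h] at hrew0; simp at hrew0
  have habsw : (1:ℝ) ≤ ‖w‖ := hrew.trans (Complex.re_le_norm w)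
  set η := ζ / w with hη
  have habsη : ‖η‖ ≤ ‖ζ‖ := by
    rw [hη, norm_div]
    calc ‖ζ‖ / ‖w‖ ≤ ‖ζ‖ / 1 :=
          div_le_div_of_nonneg_left (norm_nonneg ζ) one_pos habsw
      _ = ‖ζ‖ := div_one _
  have hη1 : ‖η‖ < 1 := lt_of_le_of_lt habsη hζ
  have hsplit : 1 + ξ + ζ = w * (1 + η) := by
    have h1 : (1 + ξ) ≠ 0 := hw0
    rw [hη, hw]; field_simp [h1]
  obtain ⟨he1, he2⟩ := abs_le.mp (Complex.abs_re_le_norm η)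
  have hreu : 0 < (1 + η).re := by
    simp only [Complex.add_re, Complex.one_re]; linarith
  have hu0 : (1 + η) ≠ 0 := by
    intro h; rw [h] at hreu; simp at hreu
  have hargw : |Complex.arg w| ≤ Real.pi / 2 :=
    Complex.abs_arg_le_pi_div_two_iff.mpr (by linarith)
  have hargu : |Complex.arg (1 + η)| < Real.pi / 2 :=
    Complex.abs_arg_lt_pi_div_two_iff.mpr (Or.inl hreu)
  have hsum : Complex.arg w + Complex.arg (1 + η) ∈ Set.Ioc (-Real.pi) Real.pi := by
    obtain ⟨a1, a2⟩ := abs_le.mp hargw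
    obtain ⟨b1, b2⟩ := abs_lt.mp hargu
    constructor <;> nlinarith [Real.pi_pos]
  have hmul : Complex.arg (w * (1 + η)) = Complex.arg w + Complex.arg (1 + η) :=
    Complex.arg_mul hw0 hu0 hsum
  rw [hsplit, hmul]
  have hstep1 : |Complex.arg w| ≤ |Complex.arg ξ| := by
    have habsξ : 0 < ‖ξ‖ := norm_pos_iff.mpr hξ
    have habs_le : ‖ξ‖ ≤ ‖w‖ := by
      have hsq : ‖ξ‖ ^ 2 ≤ ‖w‖ ^ 2 := by
        rw [Complex.sq_norm, Complex.sq_norm, Complex.normSq_apply, Complex.normSq_apply]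
        simp only [hw, Complex.add_re, Complex.add_im, Complex.one_re, Complex.one_im]
        nlinarith
      nlinarith [norm_nonneg w, norm_nonneg ξ]
    rw [Complex.arg_of_re_nonneg (le_of_lt hrew0), Complex.arg_of_re_nonneg hreξ,
      abs_arcsin', abs_arcsin']
    apply Real.monotone_arcsin
    rw [abs_div, abs_div, abs_of_pos (lt_of_lt_of_le habsξ habs_le),
      abs_of_pos habsξ]
    have himw : w.im = ξ.im := by simp [hw]
    rw [himw]
    exact div_le_div_of_nonneg_left (abs_nonneg _) habsξ habs_le
  calc |Complex.arg w + Complex.arg (1 + η)|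
      ≤ |Complex.arg w| + |Complex.arg (1 + η)| := abs_add_le _ _
    _ ≤ |Complex.arg ξ| + ‖ζ‖ / (1 - ‖ζ‖) := by
        refine add_le_add hstep1 ((key_bound hη1).trans ?_)
        exact frac_mono' (norm_nonneg η) habsη hζ
end
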